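/- If {Σ_t} is a family as above of hypersurfaces each homologous to Σ_0, and Σ_0 minimizes weighted area ∫ e^{φ} in its homology class, and μ'(t) ≤ 0 with μ(0) = 0, then ∫_{Σ_t} e^{φ} = ∫_{Σ_0} e^{φ} for all t, and consequently μ(t) = 0 for all t ∈ (−δ,δ). -/
import Mathlib


/-- If additionally Σ_0 minimizes weighted area in its homology class (so
area(0) ≤ area(t) for all leaves Σ_t, which are homologous to Σ_0), then the weighted
area is constant and the weighted mean curvature μ vanishes identically on (−δ,δ). -/
theorem weighted_area_minimizer_foliation_rigidity
    (area μ W μ' : ℝ → ℝ) (δ : ℝ) (hδ : 0 < δ)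
    -- first variation of weighted area with positive lapse
    (harea : ∀ t ∈ Set.Ioo (-δ) δ, HasDerivAt area (μ t * W t) t)
    (hW : ∀ t ∈ Set.Ioo (-δ) δ, 0 < W t)
    (hμ0 : μ 0 = 0)
    (hμderiv : ∀ t ∈ Set.Ioo (-δ) δ, HasDerivAt μ (μ' t) t)
    (hμ'le : ∀ t ∈ Set.Ioo (-δ) δ, μ' t ≤ 0)
    -- Σ_0 is weighted-area minimizing in its homology class, and each Σ_t is homologous
    (hmin : ∀ t ∈ Set.Ioo (-δ) δ, area 0 ≤ area t) :
    (∀ t ∈ Set.Ioo (-δ) δ, area t = area 0) ∧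
      (∀ t ∈ Set.Ioo (-δ) δ, μ t = 0) := by
  have h0mem : (0 : ℝ) ∈ Set.Ioo (-δ) δ := ⟨by linarith, hδ⟩
  -- μ is antitone on Ioo (-δ) δ
  have hμanti : AntitoneOn μ (Set.Ioo (-δ) δ) := by
    apply antitoneOn_of_deriv_nonpos (convex_Ioo _ _)
    · exact fun t ht => (hμderiv t ht).continuousAt.continuousWithinAt
    · rw [interior_Ioo]
      exact fun t ht => (hμderiv t ht).differentiableAt.differentiableWithinAt
    · rw [interior_Ioo]
      intro t ht
      rw [(hμderiv t ht).deriv]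
      exact hμ'le t ht
  -- area t ≤ area 0 for all t in Ioo
  have hle : ∀ t ∈ Set.Ioo (-δ) δ, area t ≤ area 0 := by
    intro t ht
    rcases le_or_gt 0 t with h0t | ht0
    · -- area antitone on Icc 0 t
      have hsub : Set.Icc (0:ℝ) t ⊆ Set.Ioo (-δ) δ := fun s hs =>
        ⟨by linarith [hs.1], lt_of_le_of_lt hs.2 ht.2⟩
      have : AntitoneOn area (Set.Icc 0 t) := by
        apply antitoneOn_of_deriv_nonpos (convex_Icc _ _)
        · exact fun s hs => (harea s (hsub hs)).continuousAt.continuousWithinAt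
        · intro s hs
          have hs' : s ∈ Set.Icc (0:ℝ) t := interior_subset hs
          exact (harea s (hsub hs')).differentiableAt.differentiableWithinAt
        · intro s hs
          have hs' : s ∈ Set.Icc (0:ℝ) t := interior_subset hs
          rw [(harea s (hsub hs')).deriv]
          have hμs : μ s ≤ 0 := by
            have := hμanti h0mem (hsub hs') hs'.1
            linarith [hμ0]
          exact mul_nonpos_of_nonpos_of_nonneg hμs (hW s (hsub hs')).le
      exact this ⟨le_refl 0, h0t⟩ ⟨h0t, le_refl t⟩ h0t
    · -- area monotone on Icc t 0
      have hsub : Set.Icc t (0:ℝ) ⊆ Set.Ioo (-δ) δ := fun s hs =>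
        ⟨lt_of_lt_of_le ht.1 hs.1, by linarith [hs.2]⟩
      have : MonotoneOn area (Set.Icc t 0) := by
        apply monotoneOn_of_deriv_nonneg (convex_Icc _ _)
        · exact fun s hs => (harea s (hsub hs)).continuousAt.continuousWithinAt
        · intro s hs
          have hs' : s ∈ Set.Icc t (0:ℝ) := interior_subset hs
          exact (harea s (hsub hs')).differentiableAt.differentiableWithinAt
        · intro s hs
          have hs' : s ∈ Set.Icc t (0:ℝ) := interior_subset hs
          rw [(harea s (hsub hs')).deriv]
          have hμs : 0 ≤ μ s := by
            have := hμanti (hsub hs') h0mem hs'.2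
            linarith [hμ0]
          exact mul_nonneg hμs (hW s (hsub hs')).le
      exact this ⟨le_refl t, ht0.le⟩ ⟨ht0.le, le_refl 0⟩ ht0.le
  have harea_eq : ∀ t ∈ Set.Ioo (-δ) δ, area t = area 0 := fun t ht =>
    le_antisymm (hle t ht) (hmin t ht)
  refine ⟨harea_eq, fun t ht => ?_⟩
  -- area is locally constant near t, so its derivative μ t * W t is zero
  have hconst : area =ᶠ[nhds t] fun _ => area 0 := by
    filter_upwards [(isOpen_Ioo).mem_nhds ht] with s hs using harea_eq s hs
  have h0 : HasDerivAt area 0 t :=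
    (hasDerivAt_const t (area 0)).congr_of_eventuallyEq hconst
  have := (harea t ht).unique h0
  have hWt := hW t ht
  have : μ t * W t = 0 := this
  rcases mul_eq_zero.mp this with h | h
  · exact h
  · exact absurd h (ne_of_gt hWt)
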